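/- Let (q_n) ⊂ (0,1) with q_n → 1 and q_n^n → a ∈ [0,1), and let f : [0,∞) → ℝ be bounded and uniformly continuous. Then for every x ≥ 0, D*_{n,q_n}(f;x) → f(x) as n → ∞. -/
import Mathlib


open Real Filter Topology

noncomputable def theta (k : ℕ) : ℝ := if Even k then 0 else 1

noncomputable def gam (μ q : ℝ) : ℕ → ℝ
  | 0 => 1
  | n + 1 => ((1 - q ^ (2 * μ * theta (n + 1) + (n + 1 : ℝ))) / (1 - q)) * gam μ q n

/-- q-number of a real `a`: `[a]_q = (1-q^a)/(1-q)` (real exponentiation). -/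
noncomputable def qnum (q a : ℝ) : ℝ := (1 - q ^ a) / (1 - q)

/-- q-Dunkl exponential `E_{μ,q}`. -/
noncomputable def Eexp (μ q x : ℝ) : ℝ := ∑' k : ℕ, q ^ (k * (k - 1) / 2) * x ^ k / gam μ q k

/-- nodes of the Dunkl q-Szász-Mirakjan operator. -/
noncomputable def node (μ q : ℝ) (n k : ℕ) : ℝ :=
  (1 - q ^ (2 * μ * theta k + (k : ℝ))) / (q ^ ((k : ℝ) - 2) * (1 - q ^ n))

/-- Dunkl q-Szász-Mirakjan operator `D*_{n,q}`. -/
noncomputable def Dop (μ q : ℝ) (n : ℕ) (f : ℝ → ℝ) (x : ℝ) : ℝ :=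
  (1 / Eexp μ q (qnum q n * x)) *
    ∑' k : ℕ, (qnum q n * x) ^ k / gam μ q k * q ^ (k * (k - 1) / 2) * f (node μ q n k)

noncomputable def wfn (μ q : ℝ) (n : ℕ) (x : ℝ) (k : ℕ) : ℝ :=
  (qnum q n * x) ^ k / gam μ q k * q ^ (k * (k - 1) / 2)

section
variable {μ q : ℝ}

lemma theta_nonneg (k : ℕ) : 0 ≤ theta k := by unfold theta; split <;> norm_num

lemma theta_le_one (k : ℕ) : theta k ≤ 1 := by unfold theta; split <;> norm_num

lemma one_le_ek (hμ : 0 < μ) (k : ℕ) : (1:ℝ) ≤ 2 * μ * theta (k+1) + ((k:ℝ)+1) := by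
  have h1 := theta_nonneg (k+1)
  have h2 : (0:ℝ) ≤ (k:ℝ) := Nat.cast_nonneg k
  nlinarith

lemma qpow_lt_one (hq0 : 0 < q) (hq1 : q < 1) {e : ℝ} (he : 0 < e) : q ^ e < 1 :=
  Real.rpow_lt_one hq0.le hq1 he

lemma qpow_le_one (hq0 : 0 < q) (hq1 : q < 1) {e : ℝ} (he : 0 ≤ e) : q ^ e ≤ 1 :=
  Real.rpow_le_one hq0.le hq1.le he

lemma qpow_le_q (hq0 : 0 < q) (hq1 : q < 1) {e : ℝ} (he : 1 ≤ e) : q ^ e ≤ q := by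
  calc q ^ e ≤ q ^ (1:ℝ) := Real.rpow_le_rpow_of_exponent_ge hq0 hq1.le he
  _ = q := Real.rpow_one q

lemma gam_succ (k : ℕ) : gam μ q (k+1)
    = ((1 - q ^ (2 * μ * theta (k+1) + ((k:ℝ) + 1))) / (1 - q)) * gam μ q k := rfl

lemma one_le_gam (hμ : 0 < μ) (hq0 : 0 < q) (hq1 : q < 1) : ∀ k, 1 ≤ gam μ q k := by
  intro k
  induction k with
  | zero => simp [gam]
  | succ m ih =>
    rw [gam_succ]
    have h1 : q ^ (2 * μ * theta (m+1) + ((m:ℝ) + 1)) ≤ q := qpow_le_q hq0 hq1 (one_le_ek hμ m)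
    have h2 : (1:ℝ) ≤ (1 - q ^ (2 * μ * theta (m+1) + ((m:ℝ) + 1))) / (1 - q) := by
      rw [le_div_iff₀ (by linarith)]
      linarith
    nlinarith

lemma gam_pos (hμ : 0 < μ) (hq0 : 0 < q) (hq1 : q < 1) (k : ℕ) : 0 < gam μ q k :=
  lt_of_lt_of_le one_pos (one_le_gam hμ hq0 hq1 k)

lemma tri_succ (k : ℕ) : (k+1) * ((k+1) - 1) / 2 = k * (k-1) / 2 + k := by
  have h : (k+1) * ((k+1) - 1) = k * (k - 1) + k * 2 := by
    cases k with
    | zero => rfl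
    | succ m => simp [Nat.succ_sub_one]; ring
  rw [h, Nat.add_mul_div_right _ _ (by norm_num : 0 < 2)]

lemma summable_qR (hq0 : 0 < q) (hq1 : q < 1) {R : ℝ} (hR : 0 ≤ R) :
    Summable (fun k : ℕ => q ^ (k * (k-1) / 2) * R ^ k) := by
  apply summable_of_ratio_norm_eventually_le (r := 1/2) (by norm_num)
  have h : Tendsto (fun k : ℕ => q ^ k * R) atTop (𝓝 0) := by
    simpa using (tendsto_pow_atTop_nhds_zero_of_lt_one hq0.le hq1).mul_const R
  filter_upwards [h.eventually (eventually_le_nhds (by norm_num : (0:ℝ) < 1/2))] with k hk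
  have h1 : (0:ℝ) ≤ q ^ (k * (k-1) / 2) * R ^ k := by positivity
  rw [Real.norm_eq_abs, Real.norm_eq_abs, abs_of_nonneg (by positivity), abs_of_nonneg h1,
    tri_succ, pow_add, pow_succ]
  calc q ^ (k * (k-1)/2) * q ^ k * (R ^ k * R) = (q ^ k * R) * (q ^ (k * (k-1)/2) * R ^ k) := by
        ring
    _ ≤ 1/2 * (q ^ (k * (k-1)/2) * R ^ k) := mul_le_mul_of_nonneg_right hk h1

lemma qnum_eq (hq0 : 0 < q) (n : ℕ) : qnum q n = (1 - q ^ n) / (1 - q) := by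
  unfold qnum
  rw [Real.rpow_natCast]

-- node basics
lemma node_zero (n : ℕ) : node μ q n 0 = 0 := by
  simp [node, theta]

lemma node_nonneg (hμ : 0 < μ) (hq0 : 0 < q) (hq1 : q < 1) (n k : ℕ) :
    0 ≤ node μ q n k := by
  unfold node
  apply div_nonneg
  · have : q ^ (2 * μ * theta k + (k:ℝ)) ≤ 1 := by
      apply qpow_le_one hq0 hq1
      have := theta_nonneg k
      have : (0:ℝ) ≤ (k:ℝ) := Nat.cast_nonneg k
      nlinarith [theta_nonneg k, hμ.le]
    linarith
  · apply mul_nonneg (Real.rpow_pos_of_pos hq0 _).le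
    have : q ^ n ≤ 1 := pow_le_one₀ hq0.le hq1.le
    linarith

lemma node_le (hμ : 0 < μ) (hq0 : 0 < q) (hq1 : q < 1) {n : ℕ} (hn : 1 ≤ n) (k : ℕ) :
    node μ q n k ≤ (1/q) ^ k / (1 - q ^ n) := by
  have hqn1 : q ^ n < 1 := pow_lt_one₀ hq0.le hq1 (by omega)
  have h1qn : 0 < 1 - q ^ n := by linarith
  have hnum : 1 - q ^ (2 * μ * theta k + (k:ℝ)) ≤ 1 := by
    have := Real.rpow_nonneg hq0.le (2 * μ * theta k + (k:ℝ))
    linarith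
  have hden : q ^ ((k:ℝ)) * (1 - q ^ n) ≤ q ^ ((k:ℝ) - 2) * (1 - q ^ n) :=
    mul_le_mul_of_nonneg_right
      (Real.rpow_le_rpow_of_exponent_ge hq0 hq1.le (by linarith)) h1qn.le
  have hdpos : 0 < q ^ ((k:ℝ)) * (1 - q ^ n) :=
    mul_pos (Real.rpow_pos_of_pos hq0 _) h1qn
  have h1 : node μ q n k ≤ 1 / (q ^ ((k:ℝ)) * (1 - q ^ n)) :=
    div_le_div₀ zero_le_one hnum hdpos hden
  calc node μ q n k ≤ 1 / (q ^ ((k:ℝ)) * (1 - q ^ n)) := h1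
    _ = (1/q) ^ k / (1 - q ^ n) := by
        rw [Real.rpow_natCast, div_pow, one_pow, div_div]

-- key first-moment identity
lemma key_id (hμ : 0 < μ) (hq0 : 0 < q) (hq1 : q < 1) {n : ℕ} (hn : 1 ≤ n)
    (x : ℝ) (k : ℕ) :
    wfn μ q n x (k+1) * node μ q n (k+1) = q * x * wfn μ q n x k := by
  have h1q : (0:ℝ) < 1 - q := by linarith
  have hqn1 : q ^ n < 1 := pow_lt_one₀ hq0.le hq1 (by omega)
  have h1qn : (0:ℝ) < 1 - q ^ n := by linarith
  have hcast : (((k+1:ℕ)):ℝ) = (k:ℝ) + 1 := by push_cast; ring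
  unfold wfn node
  rw [gam_succ, tri_succ, hcast]
  have hE1 : (1:ℝ) ≤ 2 * μ * theta (k+1) + ((k:ℝ) + 1) := one_le_ek hμ k
  have hqE : q ^ (2 * μ * theta (k+1) + ((k:ℝ) + 1)) < 1 :=
    lt_of_le_of_lt (qpow_le_q hq0 hq1 hE1) hq1
  have h1E : (0:ℝ) < 1 - q ^ (2 * μ * theta (k+1) + ((k:ℝ) + 1)) := by linarith
  have hgk := gam_pos hμ hq0 hq1 k
  have hrp : (0:ℝ) < q ^ ((k:ℝ) + 1 - 2) := Real.rpow_pos_of_pos hq0 _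
  have hqk : (q:ℝ) ^ (k:ℕ) = q ^ ((k:ℝ) + 1 - 2) * q := by
    rw [← Real.rpow_natCast q k]
    calc q ^ ((k:ℝ)) = q ^ (((k:ℝ) + 1 - 2) + 1) := by congr 1; ring
      _ = q ^ ((k:ℝ) + 1 - 2) * q ^ (1:ℝ) := Real.rpow_add hq0 _ _
      _ = q ^ ((k:ℝ) + 1 - 2) * q := by rw [Real.rpow_one]
  rw [qnum_eq hq0]
  rw [pow_succ ((1 - q ^ n) / (1 - q) * x) k]
  rw [pow_add q (k * (k-1) / 2) k, hqk]
  field_simp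

lemma node_rec (hμ : 0 < μ) (hq0 : 0 < q) (hq1 : q < 1) {n : ℕ} (hn : 1 ≤ n) (k : ℕ) :
    node μ q n (k+1) ≤ node μ q n k / q + q * (1 - q ^ (2*μ+1)) / (1 - q ^ n) := by
  have h1q : (0:ℝ) < 1 - q := by linarith
  have hqn1 : q ^ n < 1 := pow_lt_one₀ hq0.le hq1 (by omega)
  have h1qn : (0:ℝ) < 1 - q ^ n := by linarith
  have hcast : (((k+1:ℕ)):ℝ) = (k:ℝ) + 1 := by push_cast; ring
  have hk0 : (0:ℝ) < q ^ ((k:ℝ)) := Real.rpow_pos_of_pos hq0 _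
  have hmu1 : q ^ (2*μ+1) = q ^ (2*μ) * q := by
    rw [Real.rpow_add hq0, Real.rpow_one]
  have hmu_le : q ^ (2*μ) ≤ 1 := qpow_le_one hq0 hq1 (by positivity)
  have hmu_pos : (0:ℝ) < q ^ (2*μ) := Real.rpow_pos_of_pos hq0 _
  have hsplit0 : q ^ (2*μ*theta k + (k:ℝ)) = q ^ (2*μ*theta k) * q ^ ((k:ℝ)) :=
    Real.rpow_add hq0 _ _
  have hsplit1 : q ^ (2*μ*theta (k+1) + ((k:ℝ)+1))
      = q ^ (2*μ*theta (k+1)) * (q ^ ((k:ℝ)) * q) := by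
    calc q ^ (2*μ*theta (k+1) + ((k:ℝ)+1))
        = q ^ ((2*μ*theta (k+1) + (k:ℝ)) + 1) := by congr 1; ring
      _ = q ^ (2*μ*theta (k+1) + (k:ℝ)) * q ^ (1:ℝ) := Real.rpow_add hq0 _ _
      _ = (q ^ (2*μ*theta (k+1)) * q ^ ((k:ℝ))) * q := by
          rw [Real.rpow_add hq0, Real.rpow_one]
      _ = q ^ (2*μ*theta (k+1)) * (q ^ ((k:ℝ)) * q) := by ring
  have hbound : q ^ (2*μ*theta k + (k:ℝ)) - q ^ (2*μ*theta (k+1) + ((k:ℝ)+1))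
      ≤ q ^ ((k:ℝ)) * (1 - q ^ (2*μ+1)) := by
    rw [hsplit0, hsplit1, hmu1]
    rcases Nat.even_or_odd k with hk | hk
    · have h0 : theta k = 0 := by simp [theta, hk]
      have h1 : theta (k+1) = 1 := by
        simp [theta, Nat.even_add_one, hk]
      rw [h0, h1, mul_zero, Real.rpow_zero, mul_one]
      nlinarith
    · have h0 : theta k = 1 := by
        simp [theta, Nat.not_even_iff_odd.mpr hk]
      have h1 : theta (k+1) = 0 := by
        simp [theta, Nat.even_add_one, Nat.not_even_iff_odd.mpr hk]
      rw [h0, h1, mul_zero, Real.rpow_zero, mul_one, one_mul]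
      nlinarith [mul_nonneg hk0.le (mul_nonneg (sub_nonneg.mpr hmu_le)
        (by linarith : (0:ℝ) ≤ 1 + q))]
  have hqkk : q ^ ((k:ℝ)) = q ^ (((k:ℝ)+1) - 2) * q := by
    calc q ^ ((k:ℝ)) = q ^ ((((k:ℝ)+1) - 2) + 1) := by congr 1; ring
      _ = q ^ (((k:ℝ)+1) - 2) * q ^ (1:ℝ) := Real.rpow_add hq0 _ _
      _ = q ^ (((k:ℝ)+1) - 2) * q := by rw [Real.rpow_one]
  have hrp : (0:ℝ) < q ^ (((k:ℝ)+1) - 2) := Real.rpow_pos_of_pos hq0 _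
  have hDpos : 0 < q ^ (((k:ℝ)+1) - 2) * (1 - q ^ n) := mul_pos hrp h1qn
  have hden : q ^ ((k:ℝ) - 2) * (1 - q ^ n) * q = q ^ (((k:ℝ)+1) - 2) * (1 - q ^ n) := by
    have : q ^ ((k:ℝ) - 2) * q = q ^ (((k:ℝ)+1) - 2) := by
      calc q ^ ((k:ℝ) - 2) * q = q ^ ((k:ℝ) - 2) * q ^ (1:ℝ) := by rw [Real.rpow_one]
        _ = q ^ (((k:ℝ) - 2) + 1) := (Real.rpow_add hq0 _ _).symm
        _ = q ^ (((k:ℝ)+1) - 2) := by congr 1; ring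
    rw [mul_right_comm, this]
  unfold node
  rw [hcast, div_div, hden, ← sub_le_iff_le_add', div_sub_div_same]
  have hnum : (1 - q ^ (2*μ*theta (k+1) + ((k:ℝ)+1))) - (1 - q ^ (2*μ*theta k + (k:ℝ)))
      = q ^ (2*μ*theta k + (k:ℝ)) - q ^ (2*μ*theta (k+1) + ((k:ℝ)+1)) := by ring
  rw [hnum]
  calc (q ^ (2*μ*theta k + (k:ℝ)) - q ^ (2*μ*theta (k+1) + ((k:ℝ)+1)))
          / (q ^ (((k:ℝ)+1) - 2) * (1 - q ^ n))
      ≤ (q ^ ((k:ℝ)) * (1 - q ^ (2*μ+1))) / (q ^ (((k:ℝ)+1) - 2) * (1 - q ^ n)) :=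
        (div_le_div_iff_of_pos_right hDpos).mpr hbound
    _ = q * (1 - q ^ (2*μ+1)) / (1 - q ^ n) := by
        rw [hqkk]
        field_simp

lemma qnum_nonneg (hq0 : 0 < q) (hq1 : q < 1) (n : ℕ) : 0 ≤ qnum q n := by
  rw [qnum_eq hq0]
  have : q ^ n ≤ 1 := pow_le_one₀ hq0.le hq1.le
  apply div_nonneg <;> linarith

lemma wfn_nonneg (hμ : 0 < μ) (hq0 : 0 < q) (hq1 : q < 1) {n : ℕ} {x : ℝ} (hx : 0 ≤ x)
    (k : ℕ) : 0 ≤ wfn μ q n x k := by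
  unfold wfn
  have hQ0 : 0 ≤ qnum q (n:ℝ) * x := mul_nonneg (qnum_nonneg hq0 hq1 n) hx
  exact mul_nonneg (div_nonneg (pow_nonneg hQ0 _) (gam_pos hμ hq0 hq1 k).le)
    (pow_nonneg hq0.le _)

lemma wfn_zero (n : ℕ) (x : ℝ) : wfn μ q n x 0 = 1 := by simp [wfn, gam]

lemma wfn_le (hμ : 0 < μ) (hq0 : 0 < q) (hq1 : q < 1) {n : ℕ} {x : ℝ} (hx : 0 ≤ x)
    (k : ℕ) : wfn μ q n x k ≤ q ^ (k * (k-1) / 2) * (qnum q n * x) ^ k := by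
  unfold wfn
  rw [mul_comm]
  have hQ0 : 0 ≤ qnum q (n:ℝ) * x := mul_nonneg (qnum_nonneg hq0 hq1 n) hx
  exact mul_le_mul_of_nonneg_left
    (div_le_self (pow_nonneg hQ0 _) (one_le_gam hμ hq0 hq1 k)) (pow_nonneg hq0.le _)

lemma summable_wfn_mul (hμ : 0 < μ) (hq0 : 0 < q) (hq1 : q < 1) {n : ℕ} {x : ℝ}
    (hx : 0 ≤ x) {h : ℕ → ℝ} {c R : ℝ} (hc : 0 ≤ c) (hR : 0 ≤ R)
    (hh : ∀ k, |h k| ≤ c * R ^ k) : Summable (fun k => wfn μ q n x k * h k) := by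
  have hQ0 : 0 ≤ qnum q (n:ℝ) * x := mul_nonneg (qnum_nonneg hq0 hq1 n) hx
  have hgsum : Summable (fun k : ℕ => (q ^ (k * (k-1) / 2) * ((qnum q n * x) * R) ^ k) * c) :=
    (summable_qR hq0 hq1 (mul_nonneg hQ0 hR)).mul_right c
  have hle : ∀ k : ℕ, ‖wfn μ q n x k * h k‖
      ≤ (q ^ (k * (k-1) / 2) * ((qnum q n * x) * R) ^ k) * c := by
    intro k
    rw [Real.norm_eq_abs, abs_mul, abs_of_nonneg (wfn_nonneg hμ hq0 hq1 hx k)]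
    calc wfn μ q n x k * |h k|
        ≤ (q ^ (k * (k-1) / 2) * (qnum q n * x) ^ k) * (c * R ^ k) := by
          apply mul_le_mul (wfn_le hμ hq0 hq1 hx k) (hh k) (abs_nonneg _) (by positivity)
      _ = (q ^ (k * (k-1) / 2) * ((qnum q n * x) * R) ^ k) * c := by rw [mul_pow]; ring
  exact Summable.of_norm (Summable.of_nonneg_of_le (fun k => norm_nonneg _) hle hgsum)

lemma summable_wfn (hμ : 0 < μ) (hq0 : 0 < q) (hq1 : q < 1) {n : ℕ} {x : ℝ}
    (hx : 0 ≤ x) : Summable (wfn μ q n x) := by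
  have := summable_wfn_mul (n := n) hμ hq0 hq1 hx (h := fun _ => (1:ℝ)) (c := 1) (R := 1)
    zero_le_one zero_le_one (fun k => by norm_num)
  simpa using this

lemma summable_wfn_node (hμ : 0 < μ) (hq0 : 0 < q) (hq1 : q < 1) {n : ℕ} (hn : 1 ≤ n)
    {x : ℝ} (hx : 0 ≤ x) :
    Summable (fun k => wfn μ q n x k * node μ q n k) := by
  have hqn1 : q ^ n < 1 := pow_lt_one₀ hq0.le hq1 (by omega)
  have h1qn : (0:ℝ) < 1 - q ^ n := by linarith
  apply summable_wfn_mul hμ hq0 hq1 hx (c := 1 / (1 - q ^ n)) (R := 1/q)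
    (by positivity) (by positivity)
  intro k
  rw [abs_of_nonneg (node_nonneg hμ hq0 hq1 n k)]
  calc node μ q n k ≤ (1/q) ^ k / (1 - q ^ n) := node_le hμ hq0 hq1 hn k
    _ = 1 / (1 - q ^ n) * (1/q) ^ k := by ring

lemma summable_wfn_node' (hμ : 0 < μ) (hq0 : 0 < q) (hq1 : q < 1) {n : ℕ} (hn : 1 ≤ n)
    {x : ℝ} (hx : 0 ≤ x) :
    Summable (fun k => wfn μ q n x k * node μ q n (k+1)) := by
  have hqn1 : q ^ n < 1 := pow_lt_one₀ hq0.le hq1 (by omega)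
  have h1qn : (0:ℝ) < 1 - q ^ n := by linarith
  apply summable_wfn_mul hμ hq0 hq1 hx (c := (1/q) / (1 - q ^ n)) (R := 1/q)
    (by positivity) (by positivity)
  intro k
  rw [abs_of_nonneg (node_nonneg hμ hq0 hq1 n (k+1))]
  calc node μ q n (k+1) ≤ (1/q) ^ (k+1) / (1 - q ^ n) := node_le hμ hq0 hq1 hn (k+1)
    _ = (1/q) / (1 - q ^ n) * (1/q) ^ k := by rw [pow_succ]; ring

lemma summable_wfn_node_sq (hμ : 0 < μ) (hq0 : 0 < q) (hq1 : q < 1) {n : ℕ} (hn : 1 ≤ n)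
    {x : ℝ} (hx : 0 ≤ x) :
    Summable (fun k => wfn μ q n x k * (node μ q n k) ^ 2) := by
  have hqn1 : q ^ n < 1 := pow_lt_one₀ hq0.le hq1 (by omega)
  have h1qn : (0:ℝ) < 1 - q ^ n := by linarith
  apply summable_wfn_mul hμ hq0 hq1 hx (c := (1 / (1 - q ^ n)) ^ 2) (R := (1/q) ^ 2)
    (by positivity) (by positivity)
  intro k
  rw [abs_of_nonneg (sq_nonneg _)]
  have h1 := node_nonneg hμ hq0 hq1 n k
  have h2 := node_le hμ hq0 hq1 hn k
  calc (node μ q n k) ^ 2 ≤ ((1/q) ^ k / (1 - q ^ n)) ^ 2 := by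
        apply pow_le_pow_left₀ h1 h2
    _ = (1 / (1 - q ^ n)) ^ 2 * ((1/q) ^ 2) ^ k := by
        rw [pow_right_comm]
        field_simp [h1qn.ne', hq0.ne']

lemma Eexp_eq (n : ℕ) (x : ℝ) :
    Eexp μ q (qnum q n * x) = ∑' k, wfn μ q n x k := by
  unfold Eexp wfn
  exact tsum_congr fun k => by ring

lemma one_le_Eexp (hμ : 0 < μ) (hq0 : 0 < q) (hq1 : q < 1) {n : ℕ} {x : ℝ} (hx : 0 ≤ x) :
    1 ≤ Eexp μ q (qnum q n * x) := by
  rw [Eexp_eq]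
  have h := Summable.le_tsum (summable_wfn hμ hq0 hq1 hx (n := n)) 0
    (fun j _ => wfn_nonneg hμ hq0 hq1 hx j)
  rwa [wfn_zero] at h

lemma moment1 (hμ : 0 < μ) (hq0 : 0 < q) (hq1 : q < 1) {n : ℕ} (hn : 1 ≤ n)
    {x : ℝ} (hx : 0 ≤ x) :
    ∑' k, wfn μ q n x k * node μ q n k = q * x * Eexp μ q (qnum q n * x) := by
  rw [Eexp_eq, Summable.tsum_eq_zero_add (summable_wfn_node hμ hq0 hq1 hn hx), node_zero,
    mul_zero, zero_add]
  calc ∑' k, wfn μ q n x (k+1) * node μ q n (k+1)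
      = ∑' k, q * x * wfn μ q n x k := tsum_congr fun k => key_id hμ hq0 hq1 hn x k
    _ = q * x * ∑' k, wfn μ q n x k := tsum_mul_left

lemma moment2_le (hμ : 0 < μ) (hq0 : 0 < q) (hq1 : q < 1) {n : ℕ} (hn : 1 ≤ n)
    {x : ℝ} (hx : 0 ≤ x) :
    ∑' k, wfn μ q n x k * (node μ q n k) ^ 2
      ≤ (q * x^2 + q * x * (q * (1 - q ^ (2*μ+1)) / (1 - q ^ n)))
          * Eexp μ q (qnum q n * x) := by
  have hqn1 : q ^ n < 1 := pow_lt_one₀ hq0.le hq1 (by omega)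
  have h1qn : (0:ℝ) < 1 - q ^ n := by linarith
  have hqx0 : 0 ≤ q * x := mul_nonneg hq0.le hx
  have hS1 := summable_wfn_node hμ hq0 hq1 hn hx
  have hS1' := summable_wfn_node' hμ hq0 hq1 hn hx
  have hS2 := summable_wfn_node_sq hμ hq0 hq1 hn hx
  have hsw := summable_wfn hμ hq0 hq1 hx (n := n)
  rw [Summable.tsum_eq_zero_add hS2, node_zero]
  rw [show ((0:ℝ))^2 = 0 by norm_num, mul_zero, zero_add]
  have hterm : ∀ k, wfn μ q n x (k+1) * node μ q n (k+1) ^ 2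
      = q * x * (wfn μ q n x k * node μ q n (k+1)) := by
    intro k
    rw [pow_two, ← mul_assoc, key_id hμ hq0 hq1 hn x k]
    ring
  calc ∑' k, wfn μ q n x (k+1) * node μ q n (k+1) ^ 2
      = ∑' k, q * x * (wfn μ q n x k * node μ q n (k+1)) := tsum_congr hterm
    _ = q * x * ∑' k, wfn μ q n x k * node μ q n (k+1) := tsum_mul_left
    _ ≤ q * x * ∑' k, ((1/q) * (wfn μ q n x k * node μ q n k)
          + (q * (1 - q ^ (2*μ+1)) / (1 - q ^ n)) * wfn μ q n x k) := by
        apply mul_le_mul_of_nonneg_left _ hqx0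
        apply Summable.tsum_le_tsum _ hS1'
          ((hS1.mul_left (1/q)).add (hsw.mul_left (q * (1 - q ^ (2*μ+1)) / (1 - q ^ n))))
        intro k
        calc wfn μ q n x k * node μ q n (k+1)
            ≤ wfn μ q n x k * (node μ q n k / q + q * (1 - q ^ (2*μ+1)) / (1 - q ^ n)) :=
              mul_le_mul_of_nonneg_left (node_rec hμ hq0 hq1 hn k)
                (wfn_nonneg hμ hq0 hq1 hx k)
          _ = (1/q) * (wfn μ q n x k * node μ q n k)
                + (q * (1 - q ^ (2*μ+1)) / (1 - q ^ n)) * wfn μ q n x k := by ring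
    _ = q * x * ((1/q) * (q * x * Eexp μ q (qnum q n * x))
          + (q * (1 - q ^ (2*μ+1)) / (1 - q ^ n)) * Eexp μ q (qnum q n * x)) := by
        rw [Summable.tsum_add (hS1.mul_left (1/q))
            (hsw.mul_left (q * (1 - q ^ (2*μ+1)) / (1 - q ^ n))),
          tsum_mul_left, tsum_mul_left, moment1 hμ hq0 hq1 hn hx, ← Eexp_eq]
    _ = (q * x^2 + q * x * (q * (1 - q ^ (2*μ+1)) / (1 - q ^ n)))
          * Eexp μ q (qnum q n * x) := by
        field_simp

lemma central_le (hμ : 0 < μ) (hq0 : 0 < q) (hq1 : q < 1) {n : ℕ} (hn : 1 ≤ n)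
    {x : ℝ} (hx : 0 ≤ x) :
    ∑' k, wfn μ q n x k * (node μ q n k - x) ^ 2
      ≤ ((1 - q) * x^2 + q * x * (q * (1 - q ^ (2*μ+1)) / (1 - q ^ n)))
          * Eexp μ q (qnum q n * x) := by
  have hS1 := summable_wfn_node hμ hq0 hq1 hn hx
  have hS2 := summable_wfn_node_sq hμ hq0 hq1 hn hx
  have hsw := summable_wfn hμ hq0 hq1 hx (n := n)
  have hrw : (fun k => wfn μ q n x k * (node μ q n k - x) ^ 2)
      = fun k => (wfn μ q n x k * (node μ q n k) ^ 2
          - (2*x) * (wfn μ q n x k * node μ q n k)) + x^2 * wfn μ q n x k :=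
    funext fun k => by ring
  rw [hrw, Summable.tsum_add (hS2.sub (hS1.mul_left (2*x))) (hsw.mul_left (x^2)),
    Summable.tsum_sub hS2 (hS1.mul_left (2*x)), tsum_mul_left, tsum_mul_left,
    moment1 hμ hq0 hq1 hn hx, ← Eexp_eq]
  have hm2 := moment2_le hμ hq0 hq1 hn hx
  nlinarith [hm2]

lemma main_est (hμ : 0 < μ) (hq0 : 0 < q) (hq1 : q < 1) {n : ℕ} (hn : 1 ≤ n)
    {x : ℝ} (hx : 0 ≤ x) (f : ℝ → ℝ) {M : ℝ} (hM : ∀ t, 0 ≤ t → |f t| ≤ M)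
    {ε δ : ℝ} (hε : 0 ≤ ε) (hδ : 0 < δ)
    (hfδ : ∀ s t : ℝ, 0 ≤ s → 0 ≤ t → |s - t| < δ → |f s - f t| ≤ ε / 2) :
    |Dop μ q n f x - f x| ≤ ε / 2 + 2 * M / δ ^ 2 *
      ((1 - q) * x ^ 2 + q * x * (q * (1 - q ^ (2*μ+1)) / (1 - q ^ n))) := by
  have hM0 : 0 ≤ M := le_trans (abs_nonneg _) (hM 0 le_rfl)
  have hC0 : 0 ≤ 2 * M / δ ^ 2 := by positivity
  have hsw := summable_wfn hμ hq0 hq1 hx (n := n)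
  have hS3 : Summable (fun k => wfn μ q n x k * (node μ q n k - x)^2) := by
    have hrw : (fun k => wfn μ q n x k * (node μ q n k - x) ^ 2)
        = fun k => (wfn μ q n x k * (node μ q n k) ^ 2
            - (2*x) * (wfn μ q n x k * node μ q n k)) + x^2 * wfn μ q n x k :=
      funext fun k => by ring
    rw [hrw]
    exact ((summable_wfn_node_sq hμ hq0 hq1 hn hx).sub
      ((summable_wfn_node hμ hq0 hq1 hn hx).mul_left (2*x))).add (hsw.mul_left (x^2))
  have hpt : ∀ k, |f (node μ q n k) - f x|
      ≤ ε/2 + 2*M/δ^2 * (node μ q n k - x)^2 := by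
    intro k
    have hnn := node_nonneg hμ hq0 hq1 n k
    by_cases hcase : |node μ q n k - x| < δ
    · have h1 := hfδ _ _ hnn hx hcase
      have h2 : 0 ≤ 2*M/δ^2 * (node μ q n k - x)^2 := by positivity
      linarith
    · push_neg at hcase
      have hδ2 : δ^2 ≤ (node μ q n k - x)^2 := by
        nlinarith [sq_abs (node μ q n k - x), abs_nonneg (node μ q n k - x)]
      have hf1 := hM _ hnn
      have hf2 := hM x hx
      have h3 : |f (node μ q n k) - f x| ≤ 2*M := by
        rw [sub_eq_add_neg]
        calc |f (node μ q n k) + -(f x)| ≤ |f (node μ q n k)| + |-(f x)| := abs_add_le _ _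
          _ = |f (node μ q n k)| + |f x| := by rw [abs_neg]
          _ ≤ M + M := add_le_add hf1 hf2
          _ = 2*M := by ring
      have h4 : 2*M ≤ 2*M/δ^2 * (node μ q n k - x)^2 := by
        calc 2*M = 2*M/δ^2 * δ^2 := by field_simp
          _ ≤ 2*M/δ^2 * (node μ q n k - x)^2 := mul_le_mul_of_nonneg_left hδ2 hC0
      linarith
  have hbnd : ∀ k, |f (node μ q n k) - f x| ≤ M + |f x| := by
    intro k
    rw [sub_eq_add_neg]
    calc |f (node μ q n k) + -(f x)| ≤ |f (node μ q n k)| + |-(f x)| := abs_add_le _ _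
      _ = |f (node μ q n k)| + |f x| := by rw [abs_neg]
      _ ≤ M + |f x| := add_le_add (hM _ (node_nonneg hμ hq0 hq1 n k)) le_rfl
  have habs : Summable (fun k => wfn μ q n x k * |f (node μ q n k) - f x|) :=
    summable_wfn_mul hμ hq0 hq1 hx (c := M + |f x|) (R := 1) (by positivity) zero_le_one
      (fun k => by rw [abs_abs, one_pow, mul_one]; exact hbnd k)
  have hsumf : Summable (fun k => wfn μ q n x k * f (node μ q n k)) :=
    summable_wfn_mul hμ hq0 hq1 hx (c := M) (R := 1) hM0 zero_le_one
      (fun k => by rw [one_pow, mul_one]; exact hM _ (node_nonneg hμ hq0 hq1 n k))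
  have hE1 : 1 ≤ Eexp μ q (qnum q n * x) := one_le_Eexp hμ hq0 hq1 hx
  have hEpos : 0 < Eexp μ q (qnum q n * x) := lt_of_lt_of_le one_pos hE1
  have hD : Dop μ q n f x
      = (1 / Eexp μ q (qnum q n * x)) * ∑' k, wfn μ q n x k * f (node μ q n k) := rfl
  have hdiff : ∑' k, wfn μ q n x k * (f (node μ q n k) - f x)
      = (∑' k, wfn μ q n x k * f (node μ q n k)) - Eexp μ q (qnum q n * x) * f x := by
    have hrw : (fun k => wfn μ q n x k * (f (node μ q n k) - f x))
        = fun k => wfn μ q n x k * f (node μ q n k) - wfn μ q n x k * f x :=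
      funext fun k => by ring
    rw [hrw, Summable.tsum_sub hsumf (hsw.mul_right (f x)), tsum_mul_right, Eexp_eq]
  have hnorm0 : ∀ k : ℕ, ‖wfn μ q n x k * (f (node μ q n k) - f x)‖
      = wfn μ q n x k * |f (node μ q n k) - f x| := fun k => by
    rw [Real.norm_eq_abs, abs_mul, abs_of_nonneg (wfn_nonneg hμ hq0 hq1 hx k)]
  have habs2 : |∑' k, wfn μ q n x k * (f (node μ q n k) - f x)|
      ≤ (ε/2 + 2*M/δ^2 * ((1 - q) * x ^ 2
          + q * x * (q * (1 - q ^ (2*μ+1)) / (1 - q ^ n)))) * Eexp μ q (qnum q n * x) := by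
    calc |∑' k, wfn μ q n x k * (f (node μ q n k) - f x)|
        = ‖∑' k, wfn μ q n x k * (f (node μ q n k) - f x)‖ := (Real.norm_eq_abs _).symm
      _ ≤ ∑' k, ‖wfn μ q n x k * (f (node μ q n k) - f x)‖ :=
          norm_tsum_le_tsum_norm (habs.congr fun k => (hnorm0 k).symm)
      _ = ∑' k, wfn μ q n x k * |f (node μ q n k) - f x| := tsum_congr hnorm0
      _ ≤ ∑' k, (ε/2 * wfn μ q n x k
            + 2*M/δ^2 * (wfn μ q n x k * (node μ q n k - x)^2)) := by
          apply Summable.tsum_le_tsum _ habs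
            ((hsw.mul_left (ε/2)).add (hS3.mul_left (2*M/δ^2)))
          intro k
          calc wfn μ q n x k * |f (node μ q n k) - f x|
              ≤ wfn μ q n x k * (ε/2 + 2*M/δ^2 * (node μ q n k - x)^2) :=
                mul_le_mul_of_nonneg_left (hpt k) (wfn_nonneg hμ hq0 hq1 hx k)
            _ = ε/2 * wfn μ q n x k
                + 2*M/δ^2 * (wfn μ q n x k * (node μ q n k - x)^2) := by ring
      _ = ε/2 * Eexp μ q (qnum q n * x)
            + 2*M/δ^2 * ∑' k, wfn μ q n x k * (node μ q n k - x)^2 := by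
          rw [Summable.tsum_add (hsw.mul_left (ε/2)) (hS3.mul_left (2*M/δ^2)),
            tsum_mul_left, tsum_mul_left, ← Eexp_eq]
      _ ≤ ε/2 * Eexp μ q (qnum q n * x)
            + 2*M/δ^2 * (((1 - q) * x ^ 2
              + q * x * (q * (1 - q ^ (2*μ+1)) / (1 - q ^ n)))
                * Eexp μ q (qnum q n * x)) := by
          have hcen := central_le hμ hq0 hq1 hn hx
          have h2 := mul_le_mul_of_nonneg_left hcen hC0
          linarith
      _ = (ε/2 + 2*M/δ^2 * ((1 - q) * x ^ 2
            + q * x * (q * (1 - q ^ (2*μ+1)) / (1 - q ^ n))))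
              * Eexp μ q (qnum q n * x) := by ring
  have hfinal : Dop μ q n f x - f x
      = (1 / Eexp μ q (qnum q n * x))
          * ∑' k, wfn μ q n x k * (f (node μ q n k) - f x) := by
    rw [hD, hdiff]
    field_simp
  rw [hfinal, abs_mul, abs_of_nonneg (by positivity : (0:ℝ) ≤ 1 / Eexp μ q (qnum q n * x))]
  calc (1 / Eexp μ q (qnum q n * x)) * |∑' k, wfn μ q n x k * (f (node μ q n k) - f x)|
      ≤ (1 / Eexp μ q (qnum q n * x)) * ((ε/2 + 2*M/δ^2 * ((1 - q) * x ^ 2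
          + q * x * (q * (1 - q ^ (2*μ+1)) / (1 - q ^ n)))) * Eexp μ q (qnum q n * x)) :=
        mul_le_mul_of_nonneg_left habs2 (by positivity)
    _ = ε / 2 + 2 * M / δ ^ 2 *
        ((1 - q) * x ^ 2 + q * x * (q * (1 - q ^ (2*μ+1)) / (1 - q ^ n))) := by
        field_simp

end

theorem Dop_tendsto (μ : ℝ) (hμ : 0 < μ) (qs : ℕ → ℝ)
    (hq : ∀ n, 0 < qs n ∧ qs n < 1)
    (hq1 : Tendsto qs atTop (𝓝 1)) (a : ℝ) (ha0 : 0 ≤ a) (ha1 : a < 1)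
    (hqa : Tendsto (fun n => qs n ^ n) atTop (𝓝 a))
    (f : ℝ → ℝ) (hf : UniformContinuousOn f (Set.Ici 0))
    (hb : ∃ M : ℝ, ∀ t : ℝ, 0 ≤ t → |f t| ≤ M)
    (x : ℝ) (hx : 0 ≤ x) :
    Tendsto (fun n => Dop μ (qs n) n f x) atTop (𝓝 (f x)) := by
  obtain ⟨M, hM⟩ := hb
  have hM0 : 0 ≤ M := le_trans (abs_nonneg _) (hM 0 le_rfl)
  rw [Metric.tendsto_atTop]
  intro ε hε
  obtain ⟨δ, hδ, hucδ⟩ := Metric.uniformContinuousOn_iff.mp hf (ε/2) (by linarith)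
  have hfδ : ∀ s t : ℝ, 0 ≤ s → 0 ≤ t → |s - t| < δ → |f s - f t| ≤ ε/2 := by
    intro s t hs ht hst
    have h := hucδ s (Set.mem_Ici.mpr hs) t (Set.mem_Ici.mpr ht) (by rwa [Real.dist_eq])
    rw [Real.dist_eq] at h
    linarith
  have hBlim : Tendsto (fun n => 2*M/δ^2 * ((1 - qs n) * x ^ 2
      + qs n * x * (qs n * (1 - qs n ^ (2*μ+1)) / (1 - qs n ^ n)))) atTop (𝓝 0) := by
    have h1 : Tendsto (fun n => 1 - qs n) atTop (𝓝 (1 - 1)) :=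
      tendsto_const_nhds.sub hq1
    have h2 : Tendsto (fun n => qs n ^ (2*μ+1)) atTop (𝓝 (1 ^ (2*μ+1) : ℝ)) :=
      hq1.rpow_const (Or.inr (by positivity))
    have h2' : Tendsto (fun n => qs n ^ (2*μ+1)) atTop (𝓝 1) := by
      rwa [Real.one_rpow] at h2
    have h3 : Tendsto (fun n => 1 - qs n ^ n) atTop (𝓝 (1 - a)) :=
      tendsto_const_nhds.sub hqa
    have h4 : Tendsto (fun n => qs n * (1 - qs n ^ (2*μ+1)) / (1 - qs n ^ n)) atTop
        (𝓝 (1 * (1 - 1) / (1 - a))) :=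
      ((hq1.mul (tendsto_const_nhds.sub h2')).div h3 (sub_ne_zero.mpr (ne_of_gt ha1)))
    have h5 : Tendsto (fun n => (1 - qs n) * x ^ 2
        + qs n * x * (qs n * (1 - qs n ^ (2*μ+1)) / (1 - qs n ^ n))) atTop
        (𝓝 ((1 - 1) * x ^ 2 + 1 * x * (1 * (1 - 1) / (1 - a)))) :=
      (h1.mul_const (x^2)).add ((hq1.mul_const x).mul h4)
    have h6 : ((1:ℝ) - 1) * x ^ 2 + 1 * x * (1 * (1 - 1) / (1 - a)) = 0 := by
      norm_num
    rw [h6] at h5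
    simpa using h5.const_mul (2*M/δ^2)
  have hev := (hBlim.eventually_lt_const (show (0:ℝ) < ε/4 by linarith)).and
    (eventually_ge_atTop 1)
  obtain ⟨N, hN⟩ := eventually_atTop.mp hev
  refine ⟨N, fun n hn => ?_⟩
  obtain ⟨h1, h2⟩ := hN n hn
  have key := main_est hμ (hq n).1 (hq n).2 h2 hx f hM (le_of_lt hε) hδ hfδ
  rw [Real.dist_eq]
  calc |Dop μ (qs n) n f x - f x|
      ≤ ε/2 + 2*M/δ^2 * ((1 - qs n) * x ^ 2
          + qs n * x * (qs n * (1 - qs n ^ (2*μ+1)) / (1 - qs n ^ n))) := key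
    _ < ε/2 + ε/4 := by linarith
    _ < ε := by linarith
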